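/- Let Δt > 0 and U : ℕ → ℝ be a sequence satisfying, for all n ≥ 1, (U(n+1) - 2U(n) + U(n-1))/Δt² + 𝓕(U(n+1), U(n-1)) = 0, where 𝓕(a,b) = (1/4)(a+b)(a²+b²−2). Define F(s) = (1/4)(1−s²)² and Eⁿ = ((U(n+1) - U(n))/Δt)² + F(U(n)) + F(U(n+1)). Then Eⁿ = E¹ for all n ≥ 1. -/

import Mathlib

theorem stmt_10 (Δt : ℝ) (hΔt : 0 < Δt) (U : ℕ → ℝ)
    (𝓕 : ℝ → ℝ → ℝ) (F : ℝ → ℝ)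
    (h𝓕 : ∀ a b, 𝓕 a b = (1 / 4) * (a + b) * (a ^ 2 + b ^ 2 - 2))
    (hF : ∀ s, F s = (1 / 4) * (1 - s ^ 2) ^ 2)
    (hscheme : ∀ n : ℕ, 1 ≤ n →
      (U (n + 1) - 2 * U n + U (n - 1)) / Δt ^ 2 + 𝓕 (U (n + 1)) (U (n - 1)) = 0)
    (E : ℕ → ℝ)
    (hE : ∀ n, E n = ((U (n + 1) - U n) / Δt) ^ 2 + F (U n) + F (U (n + 1))) :
    ∀ n : ℕ, 1 ≤ n → E n = E 1 := by
  have hΔ : Δt ^ 2 ≠ 0 := pow_ne_zero 2 (ne_of_gt hΔt)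
  intro n hn
  induction n with
  | zero => omega
  | succ m ih =>
    rcases Nat.eq_or_lt_of_le hn with h1 | h1
    · rw [← h1]
    · have hm : 1 ≤ m := by omega
      rw [← ih hm]
      have h := hscheme (m + 1) (by omega)
      simp only [Nat.add_sub_cancel] at h
      rw [h𝓕] at h
      simp only [hE, hF]
      have hh : U (m + 1 + 1) - 2 * U (m + 1) + U m
          = -(Δt ^ 2 * ((1 / 4) * (U (m + 1 + 1) + U m) *
            (U (m + 1 + 1) ^ 2 + U m ^ 2 - 2))) := by
        field_simp at h
        linarith
      field_simp
      linear_combination (4 * (U (m + 1 + 1) - U m)) * hh
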